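/- Let (G,·,e,⊙) be a left group-e-semigroup. Then the following are equivalent: (b) e⊙e is a central idempotent of (G,⊙) and (e⊙e)⊙δ = δ for every central idempotent δ of (G,⊙); (c) the set of central idempotents of (G,⊙) is exactly {e⊙e}. (Here δ is a central idempotent of (G,⊙) means δ⊙δ = δ and δ⊙x = x⊙δ for all x ∈ G.) -/

import Mathlib

/-!
Write `f = op 1`. The left `e`-join law makes `f` a retraction that forgets how an argument was
assembled: `f (x * f y) = f (x * y)`, and `op a b = f (a * b)` whenever `f a = a`. If `δ` is an
idempotent with `(e ⊙ e) ⊙ δ = δ`, then `f δ = δ`, and idempotency gives `f (δ * w) = f w` for all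
`w`; at `w = 1` this reads `δ = e ⊙ e`.
-/

namespace LeftGroupESemigroup

variable {G : Type*} [Group G] {op : G → G → G}

theorem op_one_op_one (hjoin : ∀ x y : G, op 1 (x * y) = op 1 (op x y)) (z : G) :
    op 1 (op 1 z) = op 1 z := by
  simpa using (hjoin 1 z).symm

theorem op_op_one_one (hassoc : ∀ x y z : G, op (op x y) z = op x (op y z))
    (hjoin : ∀ x y : G, op 1 (x * y) = op 1 (op x y)) (z : G) :
    op (op 1 1) z = op 1 z := by
  rw [hassoc, ← hjoin, one_mul]

theorem op_eq_op_one_mul (hassoc : ∀ x y z : G, op (op x y) z = op x (op y z))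
    (hjoin : ∀ x y : G, op 1 (x * y) = op 1 (op x y)) {a : G} (ha : op 1 a = a) (b : G) :
    op a b = op 1 (a * b) := by
  conv_lhs => rw [← ha]
  rw [hassoc, ← hjoin]

theorem op_one_mul_op_one_left (hassoc : ∀ x y z : G, op (op x y) z = op x (op y z))
    (hjoin : ∀ x y : G, op 1 (x * y) = op 1 (op x y)) (x y : G) :
    op 1 (op 1 x * y) = op 1 (x * y) := by
  rw [hjoin, hassoc, op_one_op_one hjoin, ← hjoin]

theorem op_one_mul_op_one_right (hassoc : ∀ x y z : G, op (op x y) z = op x (op y z))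
    (hjoin : ∀ x y : G, op 1 (x * y) = op 1 (op x y)) (x y : G) :
    op 1 (x * op 1 y) = op 1 (x * y) :=
  calc op 1 (x * op 1 y) = op 1 (op x 1 * y) := by rw [hjoin, ← hassoc x 1 y, ← hjoin]
    _ = op 1 (op 1 (op x 1) * y) := (op_one_mul_op_one_left hassoc hjoin _ _).symm
    _ = op 1 (x * y) := by rw [← hjoin, mul_one, op_one_mul_op_one_left hassoc hjoin]

theorem eq_op_one_one_of_idempotent (hassoc : ∀ x y z : G, op (op x y) z = op x (op y z))
    (hjoin : ∀ x y : G, op 1 (x * y) = op 1 (op x y)) {δ : G} (hδ : op δ δ = δ)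
    (hfix : op 1 δ = δ) : δ = op 1 1 := by
  have hδ_op := op_eq_op_one_mul hassoc hjoin hfix
  have absorb : ∀ w : G, op 1 (δ * w) = op 1 w := fun w =>
    calc op 1 (δ * w) = op 1 (δ * op 1 (δ * (δ⁻¹ * w))) := by
          rw [op_one_mul_op_one_right hassoc hjoin, mul_inv_cancel_left]
      _ = op δ (op δ (δ⁻¹ * w)) := by rw [← hδ_op, ← hδ_op]
      _ = op 1 w := by rw [← hassoc, hδ, hδ_op, mul_inv_cancel_left]
  simpa [hfix] using absorb 1

end LeftGroupESemigroup

open LeftGroupESemigroup in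
/-- In a left group-`e`-semigroup `(G, ·, e, ⊙)` (group identity `e = 1`),
the following are equivalent:
(b) `e ⊙ e` is a central idempotent of `(G, ⊙)` and `(e ⊙ e) ⊙ δ = δ` for every central
idempotent `δ` of `(G, ⊙)`;
(c) the set of central idempotents of `(G, ⊙)` is exactly `{e ⊙ e}`. -/
theorem stmt_7 {G : Type*} [Group G] (op : G → G → G)
    (hassoc : ∀ x y z : G, op (op x y) z = op x (op y z))
    (hjoin : ∀ x y : G, op 1 (x * y) = op 1 (op x y)) :
    ((op (op 1 1) (op 1 1) = op 1 1 ∧ ∀ x : G, op (op 1 1) x = op x (op 1 1)) ∧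
      (∀ δ : G, (op δ δ = δ ∧ ∀ x : G, op δ x = op x δ) → op (op 1 1) δ = δ)) ↔
    {δ : G | op δ δ = δ ∧ ∀ x : G, op δ x = op x δ} = {op 1 1} := by
  constructor
  · rintro ⟨hcentral, hunit⟩
    ext δ
    refine ⟨fun hδ => eq_op_one_one_of_idempotent hassoc hjoin hδ.1 ?_, ?_⟩
    · rw [← op_op_one_one hassoc hjoin]
      exact hunit δ hδ
    · rintro rfl
      exact hcentral
  · intro h
    have hmem : op 1 1 ∈ {δ : G | op δ δ = δ ∧ ∀ x : G, op δ x = op x δ} := h ▸ rfl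
    refine ⟨hmem, fun δ hδ => ?_⟩
    obtain rfl : δ = op 1 1 := (h ▸ hδ : δ ∈ ({op 1 1} : Set G))
    exact hmem.1
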